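/- arXiv:2108.06945 — 2 statements merged into one kernel-verified Lean document; each statement's English description precedes it below -/
import Mathlib

section
/- Let φ₁,…,φ₄ ∈ L^∞(𝕋), let C₁ be the entrywise conjugation and C₂ the pair-swap conjugation on H²(𝔻), and let C̃ = (1/√2)[[C₂, C₁],[C₁, −C₂]] on H²(𝔻) ⊕ H²(𝔻). If the block Toeplitz operator T_Φ = [[T_{φ₁}, T_{φ₂}],[T_{φ₃}, T_{φ₄}]] satisfies C̃ T_Φ C̃ = T_Φ*, then for all l ∈ ℤ: (φ₁+φ₄)^(2l+1) = 0 and (φ₂−φ₃)^(2l+1) = 0. -/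
/-! The coordinates of `C̃ T_Φ C̃ = T_Φ*` at the basis vectors `(e j, 0)` and `(0, e j)` give four
linear relations among the Fourier coefficients, in which `C₂` enters through the pair swap `σ`
(`σ (2k) = 2k + 1`, `σ (2k + 1) = 2k`). When `j` and `m` have opposite parity, `σ m - j = m - σ j`,
and the sum of the first and fourth relations (resp. the difference of the second and third) reads
`f (σ m - σ j) + f (m - j) = 2 f (j - m)` for `f = c₁ + c₄` (resp. `f = c₂ - c₃`). The left side is
invariant under `(j, m) ↦ (σ j, σ m)`, so for `j` odd and `m` even
`f (j - m) = f (σ j - σ m) = f (j - m - 2)`: `f` is constant on the odd integers, and being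
square-summable it vanishes there. -/

open scoped ComplexConjugate

/-- The Hardy space `H²(𝔻)`, identified with `ℓ²(ℕ, ℂ)` via `z^n ↦ e n`. -/
noncomputable abbrev HardySpace := lp (fun _ : ℕ => ℂ) 2

/-- The standard basis vector `e j`, corresponding to `z^j`. -/
noncomputable def e (j : ℕ) : HardySpace := lp.single 2 j 1

/-- The block operator `[[A, B],[D, E]]` on `H²(𝔻) ⊕ H²(𝔻)`. -/
noncomputable def blockOp (A B D E : HardySpace →L[ℂ] HardySpace)
    (z : HardySpace × HardySpace) : HardySpace × HardySpace :=
  (A z.1 + B z.2, D z.1 + E z.2)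

/-- The conjugation `C̃ = (1/√2)[[C₂, C₁],[C₁, −C₂]]` on `H²(𝔻) ⊕ H²(𝔻)`. -/
noncomputable def tildeConj (C₁ C₂ : HardySpace → HardySpace)
    (z : HardySpace × HardySpace) : HardySpace × HardySpace :=
  (((Real.sqrt 2 : ℂ))⁻¹ • (C₂ z.1 + C₁ z.2), ((Real.sqrt 2 : ℂ))⁻¹ • (C₁ z.1 - C₂ z.2))

open Filter Topology

def pairSwap (n : ℕ) : ℕ := if Even n then n + 1 else n - 1

local notation "σ" => pairSwap

@[simp]
lemma pairSwap_two_mul (k : ℕ) : σ (2 * k) = 2 * k + 1 := by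
  simp [pairSwap]

@[simp]
lemma pairSwap_two_mul_add_one (k : ℕ) : σ (2 * k + 1) = 2 * k := by
  simp [pairSwap]

lemma pairSwap_involutive : Function.Involutive σ := by
  intro n
  obtain ⟨k, rfl | rfl⟩ := Nat.even_or_odd' n <;> simp

lemma pairSwap_sub_eq_sub_pairSwap {j m : ℕ} (h : Odd (j + m)) :
    (σ m : ℤ) - j = m - σ j := by
  obtain ⟨a, rfl | rfl⟩ := Nat.even_or_odd' j <;> obtain ⟨b, rfl | rfl⟩ := Nat.even_or_odd' m
  · exact absurd h (by simp [parity_simps])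
  · simp only [pairSwap_two_mul, pairSwap_two_mul_add_one]; push_cast; ring
  · simp only [pairSwap_two_mul, pairSwap_two_mul_add_one]; push_cast; ring
  · exact absurd h (by simp [parity_simps])

lemma e_apply (j n : ℕ) : e j n = if n = j then 1 else 0 := by
  split_ifs with h
  · subst h; exact lp.single_apply_self 2 n 1
  · exact lp.single_apply_ne 2 j 1 h

lemma apply_eq_conj_pairSwap {C : HardySpace → HardySpace}
    (h_even : ∀ (a : HardySpace) (k : ℕ), C a (2 * k) = conj (a (2 * k + 1)))
    (h_odd : ∀ (a : HardySpace) (k : ℕ), C a (2 * k + 1) = conj (a (2 * k)))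
    (a : HardySpace) (n : ℕ) : C a n = conj (a (σ n)) := by
  obtain ⟨k, rfl | rfl⟩ := Nat.even_or_odd' n <;> simp [h_even, h_odd]

lemma blockOp_smul (A B D E : HardySpace →L[ℂ] HardySpace) (c : ℂ)
    (z : HardySpace × HardySpace) : blockOp A B D E (c • z) = c • blockOp A B D E z := by
  simp [blockOp, smul_add]

lemma inv_sqrt_two_mul_conj_inv_sqrt_two_mul (x : ℂ) :
    (Real.sqrt 2 : ℂ)⁻¹ * conj ((Real.sqrt 2 : ℂ)⁻¹ * x) = 2⁻¹ * conj x := by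
  have h : ((Real.sqrt 2 : ℂ))⁻¹ * ((Real.sqrt 2 : ℂ))⁻¹ = 2⁻¹ := by
    rw [← mul_inv, ← Complex.ofReal_mul, Real.mul_self_sqrt zero_le_two, Complex.ofReal_ofNat]
  rw [map_mul, map_inv₀, Complex.conj_ofReal, ← mul_assoc, h]

section TildeConj

variable {C₁ C₂ : HardySpace → HardySpace}

lemma tildeConj_fst_apply (hC₁ : ∀ (a : HardySpace) (n : ℕ), C₁ a n = conj (a n))
    (hC₂ : ∀ (a : HardySpace) (n : ℕ), C₂ a n = conj (a (σ n)))
    (w : HardySpace × HardySpace) (m : ℕ) :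
    (tildeConj C₁ C₂ w).1 m = (Real.sqrt 2 : ℂ)⁻¹ * (conj (w.1 (σ m)) + conj (w.2 m)) := by
  simp only [tildeConj, lp.coeFn_smul, lp.coeFn_add, Pi.smul_apply, Pi.add_apply, smul_eq_mul,
    hC₁, hC₂]

lemma tildeConj_snd_apply (hC₁ : ∀ (a : HardySpace) (n : ℕ), C₁ a n = conj (a n))
    (hC₂ : ∀ (a : HardySpace) (n : ℕ), C₂ a n = conj (a (σ n)))
    (w : HardySpace × HardySpace) (m : ℕ) :
    (tildeConj C₁ C₂ w).2 m = (Real.sqrt 2 : ℂ)⁻¹ * (conj (w.1 m) - conj (w.2 (σ m))) := by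
  simp only [tildeConj, lp.coeFn_smul, lp.coeFn_sub, Pi.smul_apply, Pi.sub_apply, smul_eq_mul,
    hC₁, hC₂]

lemma tildeConj_e_zero (hC₁ : ∀ (a : HardySpace) (n : ℕ), C₁ a n = conj (a n))
    (hC₂ : ∀ (a : HardySpace) (n : ℕ), C₂ a n = conj (a (σ n))) (j : ℕ) :
    tildeConj C₁ C₂ (e j, 0) = (Real.sqrt 2 : ℂ)⁻¹ • (e (σ j), e j) := by
  ext m
  · rw [tildeConj_fst_apply hC₁ hC₂]
    simp only [Prod.smul_fst, lp.coeFn_smul, Pi.smul_apply, smul_eq_mul, e_apply,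
      pairSwap_involutive.eq_iff, lp.coeFn_zero, Pi.zero_apply]
    split_ifs <;> simp
  · rw [tildeConj_snd_apply hC₁ hC₂]
    simp only [Prod.smul_snd, lp.coeFn_smul, Pi.smul_apply, smul_eq_mul, e_apply, lp.coeFn_zero,
      Pi.zero_apply]
    split_ifs <;> simp

lemma tildeConj_zero_e (hC₁ : ∀ (a : HardySpace) (n : ℕ), C₁ a n = conj (a n))
    (hC₂ : ∀ (a : HardySpace) (n : ℕ), C₂ a n = conj (a (σ n))) (j : ℕ) :
    tildeConj C₁ C₂ (0, e j) = (Real.sqrt 2 : ℂ)⁻¹ • (e j, -e (σ j)) := by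
  ext m
  · rw [tildeConj_fst_apply hC₁ hC₂]
    simp only [Prod.smul_fst, lp.coeFn_smul, Pi.smul_apply, smul_eq_mul, e_apply, lp.coeFn_zero,
      Pi.zero_apply]
    split_ifs <;> simp
  · rw [tildeConj_snd_apply hC₁ hC₂]
    simp only [Prod.smul_snd, lp.coeFn_smul, lp.coeFn_neg, Pi.smul_apply, Pi.neg_apply,
      smul_eq_mul, e_apply, pairSwap_involutive.eq_iff, lp.coeFn_zero, Pi.zero_apply]
    split_ifs <;> simp

lemma tildeConj_inv_sqrt_two_smul_fst_apply
    (hC₁ : ∀ (a : HardySpace) (n : ℕ), C₁ a n = conj (a n))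
    (hC₂ : ∀ (a : HardySpace) (n : ℕ), C₂ a n = conj (a (σ n)))
    (w : HardySpace × HardySpace) (m : ℕ) :
    (tildeConj C₁ C₂ ((Real.sqrt 2 : ℂ)⁻¹ • w)).1 m = 2⁻¹ * conj (w.1 (σ m) + w.2 m) := by
  rw [tildeConj_fst_apply hC₁ hC₂, ← inv_sqrt_two_mul_conj_inv_sqrt_two_mul]
  simp [mul_add]

lemma tildeConj_inv_sqrt_two_smul_snd_apply
    (hC₁ : ∀ (a : HardySpace) (n : ℕ), C₁ a n = conj (a n))
    (hC₂ : ∀ (a : HardySpace) (n : ℕ), C₂ a n = conj (a (σ n)))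
    (w : HardySpace × HardySpace) (m : ℕ) :
    (tildeConj C₁ C₂ ((Real.sqrt 2 : ℂ)⁻¹ • w)).2 m = 2⁻¹ * conj (w.1 m - w.2 (σ m)) := by
  rw [tildeConj_snd_apply hC₁ hC₂, ← inv_sqrt_two_mul_conj_inv_sqrt_two_mul]
  simp [mul_sub]

end TildeConj

lemma eq_two_mul_of_inv_two_mul_conj_eq_conj {x y : ℂ} (h : 2⁻¹ * conj x = conj y) :
    x = 2 * y := by
  have h' := congrArg conj h
  simp only [map_mul, map_inv₀, map_ofNat, Complex.conj_conj] at h'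
  linear_combination 2 * h'

lemma blockToeplitz_coeff_identities_of_symm {c₁ c₂ c₃ c₄ : ℤ → ℂ}
    {T₁ T₂ T₃ T₄ S₁ S₂ S₃ S₄ : HardySpace →L[ℂ] HardySpace} {C₁ C₂ : HardySpace → HardySpace}
    (hT₁ : ∀ j m : ℕ, (T₁ (e j)) m = c₁ ((m : ℤ) - j))
    (hT₂ : ∀ j m : ℕ, (T₂ (e j)) m = c₂ ((m : ℤ) - j))
    (hT₃ : ∀ j m : ℕ, (T₃ (e j)) m = c₃ ((m : ℤ) - j))
    (hT₄ : ∀ j m : ℕ, (T₄ (e j)) m = c₄ ((m : ℤ) - j))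
    (hS₁ : ∀ j m : ℕ, (S₁ (e j)) m = conj (c₁ ((j : ℤ) - m)))
    (hS₂ : ∀ j m : ℕ, (S₂ (e j)) m = conj (c₂ ((j : ℤ) - m)))
    (hS₃ : ∀ j m : ℕ, (S₃ (e j)) m = conj (c₃ ((j : ℤ) - m)))
    (hS₄ : ∀ j m : ℕ, (S₄ (e j)) m = conj (c₄ ((j : ℤ) - m)))
    (hC₁ : ∀ (a : HardySpace) (n : ℕ), C₁ a n = conj (a n))
    (hC₂ : ∀ (a : HardySpace) (n : ℕ), C₂ a n = conj (a (σ n)))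
    (hsym : ∀ z, tildeConj C₁ C₂ (blockOp T₁ T₂ T₃ T₄ (tildeConj C₁ C₂ z)) =
      blockOp S₁ S₃ S₂ S₄ z) (j m : ℕ) :
    c₁ (σ m - σ j) + c₂ (σ m - j) + c₃ (m - σ j) + c₄ (m - j) = 2 * c₁ (j - m) ∧
    c₁ (m - σ j) + c₂ (m - j) - c₃ (σ m - σ j) - c₄ (σ m - j) = 2 * c₂ (j - m) ∧
    c₁ (σ m - j) - c₂ (σ m - σ j) + c₃ (m - j) - c₄ (m - σ j) = 2 * c₃ (j - m) ∧
    c₁ (m - j) - c₂ (m - σ j) - c₃ (σ m - j) + c₄ (σ m - σ j) = 2 * c₄ (j - m) := by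
  have hinl := hsym (e j, 0)
  have hinr := hsym (0, e j)
  rw [tildeConj_e_zero hC₁ hC₂, blockOp_smul] at hinl
  rw [tildeConj_zero_e hC₁ hC₂, blockOp_smul] at hinr
  have h₁ := congrArg (fun z => z.1 m) hinl
  have h₂ := congrArg (fun z => z.2 m) hinl
  have h₃ := congrArg (fun z => z.1 m) hinr
  have h₄ := congrArg (fun z => z.2 m) hinr
  simp only [tildeConj_inv_sqrt_two_smul_fst_apply hC₁ hC₂,
    tildeConj_inv_sqrt_two_smul_snd_apply hC₁ hC₂, blockOp, map_zero, map_neg, add_zero,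
    zero_add, lp.coeFn_add, lp.coeFn_neg, Pi.add_apply, Pi.neg_apply, hT₁, hT₂, hT₃, hT₄, hS₁,
    hS₂, hS₃, hS₄] at h₁ h₂ h₃ h₄
  refine ⟨?_, ?_, ?_, ?_⟩
  · linear_combination eq_two_mul_of_inv_two_mul_conj_eq_conj h₁
  · linear_combination eq_two_mul_of_inv_two_mul_conj_eq_conj h₂
  · linear_combination eq_two_mul_of_inv_two_mul_conj_eq_conj h₃
  · linear_combination eq_two_mul_of_inv_two_mul_conj_eq_conj h₄

lemma apply_two_mul_add_one_eq_apply_two_mul_sub_one {f : ℤ → ℂ}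
    (h : ∀ j m : ℕ, Odd (j + m) → f (σ m - σ j) + f (m - j) = 2 * f (j - m)) (l : ℤ) :
    f (2 * l + 1) = f (2 * l - 1) := by
  obtain ⟨a, b, rfl⟩ : ∃ a b : ℕ, l = b - a := ⟨(-l).toNat, l.toNat, by omega⟩
  have h_odd_even := h (2 * b + 1) (2 * a) (by simp [parity_simps])
  have h_even_odd := h (2 * b) (2 * a + 1) (by simp [parity_simps])
  simp only [pairSwap_two_mul, pairSwap_two_mul_add_one] at h_odd_even h_even_odd
  push_cast at h_odd_even h_even_odd
  rw [show 2 * ((b : ℤ) - a) + 1 = 2 * b + 1 - 2 * a by ring,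
    show 2 * ((b : ℤ) - a) - 1 = 2 * b - (2 * a + 1) by ring]
  linear_combination (h_even_odd - h_odd_even) / 2

lemma apply_two_mul_add_one_eq_zero {E : Type*} [TopologicalSpace E] [T2Space E] [Zero E]
    {f : ℤ → E} (hf : Tendsto f cofinite (𝓝 0)) (h : ∀ l : ℤ, f (2 * l + 1) = f (2 * l - 1))
    (l : ℤ) : f (2 * l + 1) = 0 := by
  set g : ℤ → E := fun l => f (2 * l + 1)
  have hg : Function.Periodic g 1 := fun l => by
    simp only [g, h (l + 1)]
    ring_nf
  have hg_const : ∀ l, g l = g 0 := fun l => by simpa using hg.int_mul l 0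
  have hg_tendsto : Tendsto g cofinite (𝓝 0) :=
    hf.comp (Function.Injective.tendsto_cofinite fun a b hab => by omega)
  have hg_zero : g 0 = 0 :=
    tendsto_nhds_unique (tendsto_const_nhds.congr fun l => (hg_const l).symm) hg_tendsto
  exact (hg_const l).trans hg_zero

lemma tendsto_cofinite_zero_of_summable_norm_sq {ι E : Type*} [SeminormedAddCommGroup E]
    {f : ι → E} (hf : Summable fun i => ‖f i‖ ^ 2) : Tendsto f cofinite (𝓝 0) := by
  rw [tendsto_zero_iff_norm_tendsto_zero]
  simpa [Real.sqrt_sq (norm_nonneg _)] using hf.tendsto_cofinite_zero.sqrt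

/-- Here `cᵢ` is the Fourier coefficient sequence of `φᵢ`, `Tᵢ = T_{φᵢ}` and `Sᵢ = T_{φᵢ}*`, so that
`T_Φ* = [[S₁, S₃],[S₂, S₄]]`. -/
theorem block_toeplitz_Ctilde_symmetric_odd_vanish (c₁ c₂ c₃ c₄ : ℤ → ℂ)
    (h₁ : Summable fun k => ‖c₁ k‖ ^ 2) (h₂ : Summable fun k => ‖c₂ k‖ ^ 2)
    (h₃ : Summable fun k => ‖c₃ k‖ ^ 2) (h₄ : Summable fun k => ‖c₄ k‖ ^ 2)
    (T₁ T₂ T₃ T₄ S₁ S₂ S₃ S₄ : HardySpace →L[ℂ] HardySpace)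
    (hT₁ : ∀ j m : ℕ, (T₁ (e j)) m = c₁ ((m : ℤ) - j))
    (hT₂ : ∀ j m : ℕ, (T₂ (e j)) m = c₂ ((m : ℤ) - j))
    (hT₃ : ∀ j m : ℕ, (T₃ (e j)) m = c₃ ((m : ℤ) - j))
    (hT₄ : ∀ j m : ℕ, (T₄ (e j)) m = c₄ ((m : ℤ) - j))
    (hS₁ : ∀ j m : ℕ, (S₁ (e j)) m = conj (c₁ ((j : ℤ) - m)))
    (hS₂ : ∀ j m : ℕ, (S₂ (e j)) m = conj (c₂ ((j : ℤ) - m)))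
    (hS₃ : ∀ j m : ℕ, (S₃ (e j)) m = conj (c₃ ((j : ℤ) - m)))
    (hS₄ : ∀ j m : ℕ, (S₄ (e j)) m = conj (c₄ ((j : ℤ) - m)))
    (C₁ C₂ : HardySpace → HardySpace)
    (hC1 : ∀ (a : HardySpace) (n : ℕ), (C₁ a) n = conj (a n))
    (hC2a : ∀ (a : HardySpace) (k : ℕ), (C₂ a) (2 * k) = conj (a (2 * k + 1)))
    (hC2b : ∀ (a : HardySpace) (k : ℕ), (C₂ a) (2 * k + 1) = conj (a (2 * k)))
    (hsym : ∀ z, tildeConj C₁ C₂ (blockOp T₁ T₂ T₃ T₄ (tildeConj C₁ C₂ z)) =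
      blockOp S₁ S₃ S₂ S₄ z) :
    ∀ l : ℤ, c₁ (2 * l + 1) + c₄ (2 * l + 1) = 0 ∧ c₂ (2 * l + 1) - c₃ (2 * l + 1) = 0 := by
  have hcoeff := blockToeplitz_coeff_identities_of_symm hT₁ hT₂ hT₃ hT₄ hS₁ hS₂ hS₃ hS₄ hC1
    (apply_eq_conj_pairSwap hC2a hC2b) hsym
  have hF : Tendsto (fun k => c₁ k + c₄ k) cofinite (𝓝 0) := by
    simpa using (tendsto_cofinite_zero_of_summable_norm_sq h₁).add
      (tendsto_cofinite_zero_of_summable_norm_sq h₄)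
  have hG : Tendsto (fun k => c₂ k - c₃ k) cofinite (𝓝 0) := by
    simpa using (tendsto_cofinite_zero_of_summable_norm_sq h₂).sub
      (tendsto_cofinite_zero_of_summable_norm_sq h₃)
  refine fun l => ⟨apply_two_mul_add_one_eq_zero hF
    (apply_two_mul_add_one_eq_apply_two_mul_sub_one (f := fun k => c₁ k + c₄ k) ?_) l,
    apply_two_mul_add_one_eq_zero hG
    (apply_two_mul_add_one_eq_apply_two_mul_sub_one (f := fun k => c₂ k - c₃ k) ?_) l⟩
  · intro j m hjm
    obtain ⟨hA, -, -, hD⟩ := hcoeff j m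
    rw [pairSwap_sub_eq_sub_pairSwap hjm] at hA hD
    linear_combination hA + hD
  · intro j m hjm
    obtain ⟨-, hB, hC, -⟩ := hcoeff j m
    rw [pairSwap_sub_eq_sub_pairSwap hjm] at hB hC
    linear_combination hB - hC
end

section
/- Let φ ∈ L^∞(𝕋) with Fourier coefficients φ̂. For μ, λ ∈ 𝕋, define the conjugation C_{μ,λ} on H²(𝔻) by (C_{μ,λ} f)(z) = μ · conj(f(λ·conj(z))). Then T_φ is C_{μ,λ}-symmetric (C_{μ,λ} T_φ C_{μ,λ} = T_φ*) if and only if φ̂(−n) = φ̂(n) λⁿ for all n ∈ ℤ. -/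
open scoped ComplexConjugate

/-!
In the basis `(e j)`, both `C T C` and `T*` act by matrices whose entries are read off from
`T_{mj} = (T (e j)) m`: the `(m, j)` entry of `C T C` is `conj (conj λ ^ j * λ ^ m * T_{mj})`
(the factors `μ` and `conj μ` cancel since `|μ| = 1`) and that of `T*` is `conj T_{jm}`.
So `C T C = T*` iff `λ ^ (m - j) * T_{mj} = T_{jm}` for all `j, m`, and for the Toeplitz matrix
`T_{mj} = φ̂ (m - j)` this is `φ̂ (-n) = φ̂ n * λ ^ n` with `n = m - j`, which ranges over all of `ℤ`.
-/

theorem e_apply_self (j : ℕ) : e j j = 1 := lp.single_apply_self 2 j 1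

theorem e_apply_of_ne {j k : ℕ} (h : k ≠ j) : e j k = 0 := lp.single_apply_ne 2 j 1 h

theorem inner_e_left (k : ℕ) (x : HardySpace) : inner ℂ (e k) x = x k := by
  simp [e, lp.inner_single_left]

theorem hasSum_apply_e_mul (T : HardySpace →L[ℂ] HardySpace) (x : HardySpace) (m : ℕ) :
    HasSum (fun j => T (e j) m * x j) (T x m) := by
  have hx := ((lp.hasSum_single ENNReal.ofNat_ne_top x).mapL T).mapL (innerSL ℂ (e m))
  have single_eq (j : ℕ) : lp.single 2 j (x j) = x j • e j := by
    rw [e, ← lp.single_smul, smul_eq_mul, mul_one]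
  simpa [innerSL_apply_apply, inner_e_left, single_eq, mul_comm] using hx

theorem hasSum_adjoint_apply (T : HardySpace →L[ℂ] HardySpace) (x : HardySpace) (m : ℕ) :
    HasSum (fun j => conj (T (e m) j) * x j) (T.adjoint x m) := by
  rw [← inner_e_left, T.adjoint_inner_right]
  simpa [mul_comm] using lp.hasSum_inner (𝕜 := ℂ) (T (e m)) x

theorem forall_eq_iff_coeff_eq_of_hasSum {F G : HardySpace → HardySpace} {a b : ℕ → ℕ → ℂ}
    (hF : ∀ x m, HasSum (fun j => a m j * x j) (F x m))
    (hG : ∀ x m, HasSum (fun j => b m j * x j) (G x m)) :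
    (∀ x, F x = G x) ↔ a = b := by
  have coeff (c : ℕ → ℂ) (j : ℕ) : HasSum (fun i => c i * e j i) (c j) := by
    simpa [e_apply_self] using hasSum_single (f := fun i => c i * e j i) j
      fun i hi => by rw [e_apply_of_ne hi, mul_zero]
  refine ⟨fun h => ?_, ?_⟩
  · ext m j
    have hFe := hF (e j) m
    rw [h] at hFe
    exact ((coeff (a m) j).unique hFe).trans ((coeff (b m) j).unique (hG (e j) m)).symm
  · rintro rfl x
    ext m
    exact (hF x m).unique (hG x m)

theorem hasSum_conj_comp_conj_apply {μ lam : ℂ} (hμ : ‖μ‖ = 1) {C : HardySpace → HardySpace}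
    (hC : ∀ (a : HardySpace) (k : ℕ), (C a) k = μ * conj (a k) * (conj lam) ^ k)
    (T : HardySpace →L[ℂ] HardySpace) (x : HardySpace) (m : ℕ) :
    HasSum (fun j => conj (conj lam ^ j * lam ^ m * T (e j) m) * x j) (C (T (C x)) m) := by
  have hμμ : μ * conj μ = 1 := by rw [Complex.mul_conj', hμ]; norm_num
  rw [hC]
  have hsum := ((Complex.hasSum_conj'.mpr (hasSum_apply_e_mul T (C x) m)).mul_left μ).mul_right
    (conj lam ^ m)
  refine (congrArg (HasSum · _) (funext fun j => ?_)).mpr hsum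
  simp only [hC, map_mul, map_pow, Complex.conj_conj]
  linear_combination -(conj (T (e j) m) * x j * lam ^ j * conj lam ^ m) * hμμ

theorem conj_comp_conj_eq_adjoint_iff {μ lam : ℂ} (hμ : ‖μ‖ = 1) {C : HardySpace → HardySpace}
    (hC : ∀ (a : HardySpace) (k : ℕ), (C a) k = μ * conj (a k) * (conj lam) ^ k)
    (T : HardySpace →L[ℂ] HardySpace) :
    (∀ x, C (T (C x)) = T.adjoint x) ↔ ∀ j m, conj lam ^ j * lam ^ m * T (e j) m = T (e m) j := by
  rw [forall_eq_iff_coeff_eq_of_hasSum (hasSum_conj_comp_conj_apply hμ hC T)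
    (hasSum_adjoint_apply T)]
  simp only [funext_iff, (RingHom.injective _).eq_iff]
  exact forall_comm

theorem forall_natCast_sub_iff {P : ℤ → Prop} : (∀ j m : ℕ, P ((m : ℤ) - j)) ↔ ∀ n, P n := by
  refine ⟨fun h n => ?_, fun h j m => h _⟩
  simpa using h (-n).toNat n.toNat

theorem conj_pow_mul_pow {lam : ℂ} (hlam : ‖lam‖ = 1) (j m : ℕ) :
    conj lam ^ j * lam ^ m = lam ^ ((m : ℤ) - j) := by
  have hlam0 : lam ≠ 0 := norm_ne_zero_iff.mp (hlam ▸ one_ne_zero)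
  rw [← Complex.inv_eq_conj hlam, zpow_sub₀ hlam0, inv_pow, zpow_natCast, zpow_natCast, mul_comm,
    div_eq_mul_inv]

theorem toeplitz_Cmulambda_symmetric_iff_general (μ lam : ℂ) (hμ : ‖μ‖ = 1) (hlam : ‖lam‖ = 1)
    (φhat : ℤ → ℂ)
    (T : HardySpace →L[ℂ] HardySpace)
    (hT : ∀ j m : ℕ, (T (e j)) m = φhat ((m : ℤ) - j))
    (C : HardySpace → HardySpace)
    (hC : ∀ (a : HardySpace) (k : ℕ), (C a) k = μ * conj (a k) * (conj lam) ^ k) :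
    (∀ x, C (T (C x)) = ContinuousLinearMap.adjoint T x) ↔
      ∀ n : ℤ, φhat (-n) = φhat n * lam ^ n := by
  rw [conj_comp_conj_eq_adjoint_iff hμ hC T, ← forall_natCast_sub_iff]
  refine forall₂_congr fun j m => ?_
  rw [hT, hT, conj_pow_mul_pow hlam, neg_sub, eq_comm, mul_comm]

/-- Ko–Lee characterization: for unimodular `μ, λ` and the conjugation
`(C_{μ,λ} f)(z) = μ conj(f(λ conj z))`, i.e. coefficientwise
`(C_{μ,λ} a)_k = μ · conj(a_k) · conj(λ)^k`, the Toeplitz operator `T_φ`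
(acting on the basis by `(T_φ e_j)_m = φhat (m-j)`, `φhat` the square-summable Fourier
coefficient sequence of `φ ∈ L^∞(𝕋)`) satisfies `C_{μ,λ} T_φ C_{μ,λ} = T_φ*` if and only if
`φhat (−n) = φhat n · λ^n` for all `n ∈ ℤ`. -/
theorem toeplitz_Cmulambda_symmetric_iff (μ lam : ℂ) (hμ : ‖μ‖ = 1) (hlam : ‖lam‖ = 1)
    (φhat : ℤ → ℂ) (hsq : Summable fun k => ‖φhat k‖ ^ 2)
    (T : HardySpace →L[ℂ] HardySpace)
    (hT : ∀ j m : ℕ, (T (e j)) m = φhat ((m : ℤ) - j))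
    (C : HardySpace → HardySpace)
    (hC : ∀ (a : HardySpace) (k : ℕ), (C a) k = μ * conj (a k) * (conj lam) ^ k) :
    (∀ x, C (T (C x)) = ContinuousLinearMap.adjoint T x) ↔
      ∀ n : ℤ, φhat (-n) = φhat n * lam ^ n :=
  toeplitz_Cmulambda_symmetric_iff_general μ lam hμ hlam φhat T hT C hC
end
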